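/- Soundness of H⁻_DPL: every theorem of H⁻_DPL is valid in every dynamic Markov model, i.e., if ⊢ φ then for every dynamic Markov model M and world w, M, w ⊨ φ. -/
import Mathlib


open MeasureTheory
open scoped ENNReal

/-- Formulas of dynamic probability logic. -/
inductive DPLF : Type
  | var : ℕ → DPLF
  | neg : DPLF → DPLF
  | conj : DPLF → DPLF → DPLF
  | prob : ℚ → DPLF → DPLF
  | next : DPLF → DPLF
deriving DecidableEq

namespace DPLF

def falsum : DPLF := (var 0).conj (var 0).neg
def impl (φ ψ : DPLF) : DPLF := (φ.conj ψ.neg).neg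
def disj (φ ψ : DPLF) : DPLF := (φ.neg.conj ψ.neg).neg
def iffF (φ ψ : DPLF) : DPLF := (φ.impl ψ).conj (ψ.impl φ)

/-- n-fold application of the next operator. -/
def nextn : ℕ → DPLF → DPLF
  | 0, φ => φ
  | n+1, φ => (nextn n φ).next

/-- Iterated probability operators `L_{r₁ … r_k}`. -/
def probs : List ℚ → DPLF → DPLF
  | [], φ => φ
  | r :: rs, φ => prob r (probs rs φ)

/-- Propositional tautology: true under every Boolean valuation respecting ¬ and ∧. -/
def IsTautology (φ : DPLF) : Prop :=
  ∀ v : DPLF → Bool, (∀ ψ, v ψ.neg = !v ψ) →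
    (∀ ψ χ, v (ψ.conj χ) = (v ψ && v χ)) → v φ = true

/-- Theoremhood in the Hilbert system `H⁻_DPL`. -/
inductive Hm : DPLF → Prop
  | taut {φ : DPLF} : IsTautology φ → Hm φ
  | fa1 : Hm (prob 0 falsum)
  | fa2 {φ : DPLF} {r s : ℚ} : 0 ≤ r → r ≤ 1 → 0 ≤ s → s ≤ 1 → 1 < r + s →
      Hm (impl (prob r φ.neg) (prob s φ).neg)
  | fa3 {φ ψ : DPLF} {r s : ℚ} : 0 ≤ r → 0 ≤ s → r + s ≤ 1 →
      Hm (impl ((prob r (φ.conj ψ)).conj (prob s (φ.conj ψ.neg))) (prob (r+s) φ))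
  | fa4 {φ ψ : DPLF} {r s : ℚ} : 0 ≤ r → 0 ≤ s → r + s ≤ 1 →
      Hm (impl ((prob r (φ.conj ψ)).neg.conj (prob s (φ.conj ψ.neg)).neg) (prob (r+s) φ).neg)
  | mono {φ ψ : DPLF} {r : ℚ} : 0 ≤ r → r ≤ 1 →
      Hm (impl (prob 1 (impl φ ψ)) (impl (prob r φ) (prob r ψ)))
  | func {φ : DPLF} : Hm (iffF φ.neg.next φ.next.neg)
  | conjNext {φ ψ : DPLF} : Hm (iffF (φ.conj ψ).next (φ.next.conj ψ.next))
  | mp {φ ψ : DPLF} : Hm (impl φ ψ) → Hm φ → Hm ψ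
  | arch {φ ψ : DPLF} {n : ℕ} {r : ℚ} : 0 ≤ r → r ≤ 1 →
      (∀ s : ℚ, 0 ≤ s → s < r → Hm (impl ψ (nextn n (prob s φ)))) →
      Hm (impl ψ (nextn n (prob r φ)))
  | necL {φ : DPLF} : Hm φ → Hm (prob 1 φ)
  | necNext {φ : DPLF} : Hm φ → Hm φ.next

/-- Theoremhood in the Hilbert system `H_DPL` (with the generalized Archimedean rule). -/
inductive Hg : DPLF → Prop
  | taut {φ : DPLF} : IsTautology φ → Hg φ
  | fa1 : Hg (prob 0 falsum)
  | fa2 {φ : DPLF} {r s : ℚ} : 0 ≤ r → r ≤ 1 → 0 ≤ s → s ≤ 1 → 1 < r + s →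
      Hg (impl (prob r φ.neg) (prob s φ).neg)
  | fa3 {φ ψ : DPLF} {r s : ℚ} : 0 ≤ r → 0 ≤ s → r + s ≤ 1 →
      Hg (impl ((prob r (φ.conj ψ)).conj (prob s (φ.conj ψ.neg))) (prob (r+s) φ))
  | fa4 {φ ψ : DPLF} {r s : ℚ} : 0 ≤ r → 0 ≤ s → r + s ≤ 1 →
      Hg (impl ((prob r (φ.conj ψ)).neg.conj (prob s (φ.conj ψ.neg)).neg) (prob (r+s) φ).neg)
  | mono {φ ψ : DPLF} {r : ℚ} : 0 ≤ r → r ≤ 1 →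
      Hg (impl (prob 1 (impl φ ψ)) (impl (prob r φ) (prob r ψ)))
  | func {φ : DPLF} : Hg (iffF φ.neg.next φ.next.neg)
  | conjNext {φ ψ : DPLF} : Hg (iffF (φ.conj ψ).next (φ.next.conj ψ.next))
  | mp {φ ψ : DPLF} : Hg (impl φ ψ) → Hg φ → Hg ψ
  | garch {φ ψ : DPLF} {n : ℕ} {rs : List ℚ} {r : ℚ} : 0 ≤ r → r ≤ 1 →
      (∀ q ∈ rs, 0 ≤ q ∧ q ≤ 1) →
      (∀ s : ℚ, 0 ≤ s → s < r → Hg (impl ψ (nextn n (probs rs (prob s φ))))) →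
      Hg (impl ψ (nextn n (probs rs (prob r φ))))
  | necL {φ : DPLF} : Hg φ → Hg (prob 1 φ)
  | necNext {φ : DPLF} : Hg φ → Hg φ.next

/-- Derivability from assumptions in `H⁻_DPL` (no necessitation on assumptions). -/
inductive HmFrom (Γ : Set DPLF) : DPLF → Prop
  | assum {φ : DPLF} : φ ∈ Γ → HmFrom Γ φ
  | thm {φ : DPLF} : Hm φ → HmFrom Γ φ
  | mp {φ ψ : DPLF} : HmFrom Γ (impl φ ψ) → HmFrom Γ φ → HmFrom Γ ψ
  | arch {φ ψ : DPLF} {n : ℕ} {r : ℚ} : 0 ≤ r → r ≤ 1 →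
      (∀ s : ℚ, 0 ≤ s → s < r → HmFrom Γ (impl ψ (nextn n (prob s φ)))) →
      HmFrom Γ (impl ψ (nextn n (prob r φ)))

/-- Derivability from assumptions in `H_DPL` (no necessitation on assumptions). -/
inductive HgFrom (Γ : Set DPLF) : DPLF → Prop
  | assum {φ : DPLF} : φ ∈ Γ → HgFrom Γ φ
  | thm {φ : DPLF} : Hg φ → HgFrom Γ φ
  | mp {φ ψ : DPLF} : HgFrom Γ (impl φ ψ) → HgFrom Γ φ → HgFrom Γ ψ
  | garch {φ ψ : DPLF} {n : ℕ} {rs : List ℚ} {r : ℚ} : 0 ≤ r → r ≤ 1 →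
      (∀ q ∈ rs, 0 ≤ q ∧ q ≤ 1) →
      (∀ s : ℚ, 0 ≤ s → s < r → HgFrom Γ (impl ψ (nextn n (probs rs (prob s φ))))) →
      HgFrom Γ (impl ψ (nextn n (probs rs (prob r φ))))

/-- Consistency of a set of formulas in `H_DPL`. -/
def GConsistent (Γ : Set DPLF) : Prop := ¬ HgFrom Γ falsum

/-- Consistency of a set of formulas in `H⁻_DPL`. -/
def MConsistent (Γ : Set DPLF) : Prop := ¬ HmFrom Γ falsum

/-- Saturated sets of formulas. -/
structure Saturated (w : Set DPLF) : Prop where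
  fincon : ∀ Γ : Set DPLF, Γ ⊆ w → Γ.Finite → GConsistent Γ
  negcomplete : ∀ φ : DPLF, φ ∈ w ∨ φ.neg ∈ w
  archProp : ∀ (φ : DPLF) (n : ℕ) (rs : List ℚ) (r : ℚ), 0 ≤ r → r ≤ 1 →
    (∀ q ∈ rs, 0 ≤ q ∧ q ≤ 1) →
    (∀ s : ℚ, 0 ≤ s → s < r → nextn n (probs rs (prob s φ)) ∈ w) →
    nextn n (probs rs (prob r φ)) ∈ w

/-- The canonical space: all saturated sets. -/
def Omegac : Type := {w : Set DPLF // Saturated w}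

/-- The basic set `[φ]` of saturated sets containing `φ`. -/
def box (φ : DPLF) : Set Omegac := {w | φ ∈ w.1}

/-- The canonical base `B_c`. -/
def Bc : Set (Set Omegac) := {A | ∃ φ : DPLF, A = box φ}

/-- Dynamic Markov model. -/
structure DMM where
  World : Type
  σ : MeasurableSpace World
  T : World → @Measure World σ
  T_prob : ∀ w, IsProbabilityMeasure (T w)
  T_meas : ∀ A : Set World, MeasurableSet[σ] A →
    @Measurable World ℝ≥0∞ σ _ (fun w => T w A)
  f : World → World
  f_meas : @Measurable World World σ σ f
  v : ℕ → Set World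
  v_meas : ∀ p : ℕ, MeasurableSet[σ] (v p)

/-- Satisfaction in a dynamic Markov model. -/
def Sat (M : DMM) : DPLF → M.World → Prop
  | var p, w => w ∈ M.v p
  | neg φ, w => ¬ Sat M φ w
  | conj φ ψ, w => Sat M φ w ∧ Sat M ψ w
  | prob r φ, w => ENNReal.ofReal (r : ℝ) ≤ M.T w {u | Sat M φ u}
  | next φ, w => Sat M φ (M.f w)

end DPLF


open DPLF

private lemma aux_forall_lt {x : ℝ≥0∞} {r : ℚ}
    (h : ∀ s : ℚ, 0 ≤ s → s < r → ENNReal.ofReal (s:ℝ) ≤ x) :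
    ENNReal.ofReal (r:ℝ) ≤ x := by
  by_contra hc
  push_neg at hc
  obtain ⟨q, hq0, hq1, hq2⟩ := ENNReal.lt_iff_exists_rat_btwn.1 hc
  have heq : ((Real.toNNReal (q:ℝ) : NNReal) : ℝ≥0∞) = ENNReal.ofReal (q:ℝ) := rfl
  rw [heq] at hq1 hq2
  have hqr : (q:ℝ) < (r:ℝ) :=
    (ENNReal.ofReal_lt_ofReal_iff_of_nonneg (by exact_mod_cast hq0)).1 hq2
  exact absurd (lt_of_le_of_lt (h q hq0 (by exact_mod_cast hqr)) hq1) (lt_irrefl _)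

private lemma sat_impl (M : DMM) (φ ψ : DPLF) (w : M.World) :
    Sat M (DPLF.impl φ ψ) w ↔ (Sat M φ w → Sat M ψ w) := by
  simp only [DPLF.impl, Sat]; tauto

private lemma sat_nextn (M : DMM) (φ : DPLF) : ∀ (n : ℕ) (w : M.World),
    Sat M (nextn n φ) w ↔ Sat M φ (M.f^[n] w)
  | 0, w => Iff.rfl
  | n+1, w => by
      show Sat M (nextn n φ) (M.f w) ↔ _
      rw [sat_nextn M φ n (M.f w), Function.iterate_succ_apply]

private lemma meas_sat (M : DMM) : ∀ φ : DPLF, MeasurableSet[M.σ] {u | Sat M φ u}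
  | var p => M.v_meas p
  | neg φ => (meas_sat M φ).compl
  | conj φ ψ => (meas_sat M φ).inter (meas_sat M ψ)
  | prob r φ => by
      have h := M.T_meas _ (meas_sat M φ)
      exact h measurableSet_Ici
  | next φ => M.f_meas (meas_sat M φ)

open DPLF in
/-- Soundness of H⁻_DPL: every theorem is valid in every dynamic Markov model. -/
theorem stmt3 (φ : DPLF) (h : Hm φ) : ∀ (M : DMM) (w : M.World), Sat M φ w := by
  induction h with
  | @taut φ ht =>
      intro M w
      classical
      have h1 : ∀ ψ, (fun χ => if Sat M χ w then true else false) ψ.neg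
          = !(fun χ => if Sat M χ w then true else false) ψ := by
        intro ψ; by_cases hh : Sat M ψ w <;> simp [Sat, hh]
      have h2 : ∀ ψ χ, (fun χ => if Sat M χ w then true else false) (ψ.conj χ)
          = ((fun χ => if Sat M χ w then true else false) ψ
            && (fun χ => if Sat M χ w then true else false) χ) := by
        intro ψ χ; by_cases ha : Sat M ψ w <;> by_cases hb : Sat M χ w <;> simp [Sat, ha, hb]
      have := ht (fun χ => if Sat M χ w then true else false) h1 h2
      by_cases hφ : Sat M φ w
      · exact hφ
      · simp [hφ] at this
  | fa1 =>
      intro M w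
      show ENNReal.ofReal ((0:ℚ):ℝ) ≤ _
      simp
  | @fa2 φ r s hr0 hr1 hs0 hs1 hrs =>
      intro M w
      rw [sat_impl]
      intro h1 h2
      haveI := M.T_prob w
      have hA : MeasurableSet[M.σ] {u | Sat M φ u} := meas_sat M φ
      have hadd : M.T w {u | Sat M φ u} + M.T w {u | Sat M φ u}ᶜ = 1 := by
        rw [measure_add_measure_compl hA, measure_univ]
      have h1' : ENNReal.ofReal ((r:ℝ)) ≤ M.T w {u | Sat M φ u}ᶜ := h1
      have h2' : ENNReal.ofReal ((s:ℝ)) ≤ M.T w {u | Sat M φ u} := h2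
      have hle : ENNReal.ofReal ((s:ℝ)) + ENNReal.ofReal ((r:ℝ)) ≤ 1 := by
        rw [← hadd]; exact add_le_add h2' h1'
      rw [← ENNReal.ofReal_add (by exact_mod_cast hs0) (by exact_mod_cast hr0)] at hle
      have hle2 : ((s:ℝ) + (r:ℝ)) ≤ 1 := ENNReal.ofReal_le_one.1 hle
      linarith [(by exact_mod_cast hrs : (1:ℝ) < (r:ℝ) + (s:ℝ))]
  | @fa3 φ ψ r s hr0 hs0 hrs =>
      intro M w
      rw [sat_impl]
      rintro ⟨h1, h2⟩
      have hB : MeasurableSet[M.σ] {u | Sat M ψ u} := meas_sat M ψ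
      have hsplit : M.T w ({u | Sat M φ u} ∩ {u | Sat M ψ u})
          + M.T w ({u | Sat M φ u} \ {u | Sat M ψ u}) = M.T w {u | Sat M φ u} :=
        measure_inter_add_diff _ hB
      have h1' : ENNReal.ofReal ((r:ℝ)) ≤ M.T w ({u | Sat M φ u} ∩ {u | Sat M ψ u}) := h1
      have h2' : ENNReal.ofReal ((s:ℝ)) ≤ M.T w ({u | Sat M φ u} \ {u | Sat M ψ u}) := h2
      show ENNReal.ofReal (((r+s:ℚ)):ℝ) ≤ _
      rw [show (((r+s:ℚ)):ℝ) = (r:ℝ)+(s:ℝ) by push_cast; ring,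
        ENNReal.ofReal_add (by exact_mod_cast hr0) (by exact_mod_cast hs0), ← hsplit]
      exact add_le_add h1' h2'
  | @fa4 φ ψ r s hr0 hs0 hrs =>
      intro M w
      rw [sat_impl]
      rintro ⟨h1, h2⟩
      have h1' : M.T w ({u | Sat M φ u} ∩ {u | Sat M ψ u}) < ENNReal.ofReal (r:ℝ) :=
        lt_of_not_ge h1
      have h2' : M.T w ({u | Sat M φ u} \ {u | Sat M ψ u}) < ENNReal.ofReal (s:ℝ) :=
        lt_of_not_ge h2
      have hB : MeasurableSet[M.σ] {u | Sat M ψ u} := meas_sat M ψ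
      have hsplit : M.T w ({u | Sat M φ u} ∩ {u | Sat M ψ u})
          + M.T w ({u | Sat M φ u} \ {u | Sat M ψ u}) = M.T w {u | Sat M φ u} :=
        measure_inter_add_diff _ hB
      intro hge
      have hlt : M.T w {u | Sat M φ u} < ENNReal.ofReal (r:ℝ) + ENNReal.ofReal (s:ℝ) := by
        rw [← hsplit]; exact ENNReal.add_lt_add h1' h2'
      rw [← ENNReal.ofReal_add (by exact_mod_cast hr0) (by exact_mod_cast hs0)] at hlt
      have hge' : ENNReal.ofReal (((r+s:ℚ)):ℝ) ≤ M.T w {u | Sat M φ u} := hge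
      rw [show (((r+s:ℚ)):ℝ) = (r:ℝ)+(s:ℝ) by push_cast; ring] at hge'
      exact absurd (lt_of_le_of_lt hge' hlt) (lt_irrefl _)
  | @mono φ ψ r hr0 hr1 =>
      intro M w
      rw [sat_impl]
      intro h1
      rw [sat_impl]
      intro h2
      haveI := M.T_prob w
      have hA : MeasurableSet[M.σ] {u | Sat M ψ u} := meas_sat M ψ
      have hD : MeasurableSet[M.σ] ({u | Sat M φ u} \ {u | Sat M ψ u}) :=
        (meas_sat M φ).diff hA
      have hsplit : M.T w ({u | Sat M φ u} ∩ {u | Sat M ψ u})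
          + M.T w ({u | Sat M φ u} \ {u | Sat M ψ u}) = M.T w {u | Sat M φ u} :=
        measure_inter_add_diff _ hA
      have h1' : ENNReal.ofReal (((1:ℚ)):ℝ)
          ≤ M.T w (({u | Sat M φ u} \ {u | Sat M ψ u})ᶜ) := h1
      have hone : (1:ℝ≥0∞) ≤ M.T w (({u | Sat M φ u} \ {u | Sat M ψ u})ᶜ) := by
        simpa using h1'
      have hcompl := measure_add_measure_compl (μ := M.T w) hD
      rw [measure_univ] at hcompl
      have hD1 : M.T w ({u | Sat M φ u} \ {u | Sat M ψ u}) + 1 ≤ 0 + 1 := by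
        rw [zero_add]
        calc M.T w ({u | Sat M φ u} \ {u | Sat M ψ u}) + 1
            ≤ M.T w ({u | Sat M φ u} \ {u | Sat M ψ u})
              + M.T w (({u | Sat M φ u} \ {u | Sat M ψ u})ᶜ) := add_le_add le_rfl hone
          _ = 1 := hcompl
      have hzero : M.T w ({u | Sat M φ u} \ {u | Sat M ψ u}) = 0 :=
        nonpos_iff_eq_zero.1 ((ENNReal.add_le_add_iff_right ENNReal.one_ne_top).1 hD1)
      have hle : M.T w {u | Sat M φ u} ≤ M.T w {u | Sat M ψ u} := by
        rw [← hsplit, hzero, add_zero]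
        exact measure_mono Set.inter_subset_right
      exact le_trans h2 hle
  | @func φ =>
      intro M w
      exact ⟨(sat_impl M _ _ w).2 fun h => h, (sat_impl M _ _ w).2 fun h => h⟩
  | @conjNext φ ψ =>
      intro M w
      exact ⟨(sat_impl M _ _ w).2 fun h => h, (sat_impl M _ _ w).2 fun h => h⟩
  | @mp φ ψ h1 h2 ih1 ih2 =>
      intro M w
      exact (sat_impl M φ ψ w).1 (ih1 M w) (ih2 M w)
  | @arch φ ψ n r hr0 hr1 hs ih =>
      intro M w
      rw [sat_impl]
      intro hψ
      rw [sat_nextn]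
      show ENNReal.ofReal ((r:ℚ):ℝ) ≤ _
      apply aux_forall_lt
      intro s hs0 hsr
      have := (sat_impl M ψ _ w).1 (ih s hs0 hsr M w) hψ
      rw [sat_nextn] at this
      exact this
  | @necL φ h ih =>
      intro M w
      haveI := M.T_prob w
      show ENNReal.ofReal ((1:ℚ):ℝ) ≤ _
      have huniv : {u | Sat M φ u} = Set.univ := Set.eq_univ_of_forall (fun u => ih M u)
      rw [huniv, measure_univ]
      simp
  | @necNext φ h ih =>
      intro M w
      exact ih M (M.f w)
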